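/- Let F : (0,π) → ℝ, F(φ) = φ sin²φ cos φ/(sin φ − φ cos φ). There exists a unique φ_m ∈ (0,π) such that F is strictly decreasing on (0, φ_m] and strictly increasing on [φ_m, π); moreover F(π/2) = 0 and F(φ) → 0 as φ → π⁻. -/

import Mathlib

open Real Filter

noncomputable def FH (φ : ℝ) : ℝ :=
  φ * (Real.sin φ) ^ 2 * Real.cos φ / (Real.sin φ - φ * Real.cos φ)

/-!
`F' = sin φ · h(φ) / (sin φ - φ cos φ)²` with
`h(φ) = cos φ (sin φ - φ cos φ)(sin φ + 2φ cos φ) - φ sin³ φ`. Away from `π/2`,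
`h = -cos³ φ · g` where `g(φ) = 2φ² + φ(t³ - t) - t²`, `t = tan φ`, and
`g' = φ(3 + 2t² + 3t⁴) - t(3 + t²)`. This is positive: for `φ > π/2` because `t < 0`, and for
`φ < π/2` because `arctan t > t(3 + t²)/(3 + 2t² + 3t⁴)` for `t > 0` (the difference vanishes at
`0` and has derivative `4t⁴(11 + 10t² + 3t⁴)/((1 + t²)(3 + 2t² + 3t⁴)²)`). So `g > 0` on
`(0, π/2)`, i.e. `h < 0` there (and `h(π/2) = -π/2`), while on `(π/2, π]` the function `g`
increases from `g(2π/3) < 0` to `g(π) = 2π² > 0`; its zero is `φ_m`.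
-/

open Set

theorem strictMonoOn_of_hasDerivAt_pos {D : Set ℝ} (hD : Convex ℝ D) {f f' : ℝ → ℝ}
    (hf : ∀ x ∈ D, HasDerivAt f (f' x) x) (hf' : ∀ x ∈ interior D, 0 < f' x) :
    StrictMonoOn f D :=
  strictMonoOn_of_hasDerivWithinAt_pos hD (fun x hx ↦ (hf x hx).continuousAt.continuousWithinAt)
    (fun x hx ↦ (hf x (interior_subset hx)).hasDerivWithinAt) hf'

theorem strictAntiOn_of_hasDerivAt_neg {D : Set ℝ} (hD : Convex ℝ D) {f f' : ℝ → ℝ}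
    (hf : ∀ x ∈ D, HasDerivAt f (f' x) x) (hf' : ∀ x ∈ interior D, f' x < 0) :
    StrictAntiOn f D :=
  strictAntiOn_of_hasDerivWithinAt_neg hD (fun x hx ↦ (hf x hx).continuousAt.continuousWithinAt)
    (fun x hx ↦ (hf x (interior_subset hx)).hasDerivWithinAt) hf'

theorem strictAntiOn_Ioc_and_strictMonoOn_Ico_of_hasDerivAt {f f' : ℝ → ℝ} {a m b : ℝ}
    (hm : m ∈ Ioo a b) (hf : ∀ x ∈ Ioo a b, HasDerivAt f (f' x) x)
    (hneg : ∀ x ∈ Ioo a m, f' x < 0) (hpos : ∀ x ∈ Ioo m b, 0 < f' x) :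
    StrictAntiOn f (Ioc a m) ∧ StrictMonoOn f (Ico m b) := by
  constructor
  · refine strictAntiOn_of_hasDerivAt_neg (convex_Ioc a m)
      (fun x hx ↦ hf x ⟨hx.1, hx.2.trans_lt hm.2⟩) ?_
    rw [interior_Ioc]
    exact hneg
  · refine strictMonoOn_of_hasDerivAt_pos (convex_Ico m b)
      (fun x hx ↦ hf x ⟨hm.1.trans_le hx.1, hx.2⟩) ?_
    rw [interior_Ico]
    exact hpos

theorem eq_of_strictAntiOn_Ioc_of_strictMonoOn_Ico {f : ℝ → ℝ} {a b m m' : ℝ}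
    (hm : m ∈ Ioo a b) (hm' : m' ∈ Ioo a b)
    (hanti : StrictAntiOn f (Ioc a m)) (hmono : StrictMonoOn f (Ico m b))
    (hanti' : StrictAntiOn f (Ioc a m')) (hmono' : StrictMonoOn f (Ico m' b)) : m = m' := by
  by_contra hne
  rcases lt_or_gt_of_ne hne with hlt | hlt
  · exact (hmono ⟨le_rfl, hm.2⟩ ⟨hlt.le, hm'.2⟩ hlt).not_gt
      (hanti' ⟨hm.1, hlt.le⟩ ⟨hm'.1, le_rfl⟩ hlt)
  · exact (hmono' ⟨le_rfl, hm'.2⟩ ⟨hlt.le, hm.2⟩ hlt).not_gt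
      (hanti ⟨hm'.1, hlt.le⟩ ⟨hm.1, le_rfl⟩ hlt)

theorem sin_sub_mul_cos_pos {x : ℝ} (hx : 0 < x) (hxπ : x ≤ π) : 0 < sin x - x * cos x := by
  have hderiv (y : ℝ) : HasDerivAt (fun z ↦ sin z - z * cos z) (y * sin y) y :=
    ((hasDerivAt_sin y).fun_sub ((hasDerivAt_id' y).fun_mul (hasDerivAt_cos y))).congr_deriv
      (by ring)
  have hmono : StrictMonoOn (fun z ↦ sin z - z * cos z) (Icc 0 π) := by
    refine strictMonoOn_of_hasDerivAt_pos (convex_Icc 0 π) (fun y _ ↦ hderiv y) ?_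
    rw [interior_Icc]
    exact fun y hy ↦ mul_pos hy.1 (sin_pos_of_pos_of_lt_pi hy.1 hy.2)
  simpa using hmono (left_mem_Icc.2 pi_pos.le) ⟨hx.le, hxπ⟩ hx

noncomputable def FHDerivNum (x : ℝ) : ℝ :=
  cos x * (sin x - x * cos x) * (sin x + 2 * x * cos x) - x * sin x ^ 3

theorem hasDerivAt_FH {x : ℝ} (hx : 0 < x) (hxπ : x ≤ π) :
    HasDerivAt FH (sin x * FHDerivNum x / (sin x - x * cos x) ^ 2) x := by
  have hD := (sin_sub_mul_cos_pos hx hxπ).ne'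
  refine ((((hasDerivAt_id' x).fun_mul ((hasDerivAt_sin x).fun_pow 2)).fun_mul
    (hasDerivAt_cos x)).fun_div ((hasDerivAt_sin x).fun_sub
    ((hasDerivAt_id' x).fun_mul (hasDerivAt_cos x))) hD).congr_deriv ?_
  field_simp
  rw [FHDerivNum]
  ring

theorem cubic_div_quartic_lt_arctan {t : ℝ} (ht : 0 < t) :
    t * (3 + t ^ 2) / (3 + 2 * t ^ 2 + 3 * t ^ 4) < arctan t := by
  have hq (s : ℝ) : 0 < 3 + 2 * s ^ 2 + 3 * s ^ 4 := by positivity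
  have hderiv (s : ℝ) : HasDerivAt (fun u ↦ arctan u - u * (3 + u ^ 2) / (3 + 2 * u ^ 2 + 3 * u ^ 4))
      (4 * s ^ 4 * (11 + 10 * s ^ 2 + 3 * s ^ 4) /
        ((1 + s ^ 2) * (3 + 2 * s ^ 2 + 3 * s ^ 4) ^ 2)) s := by
    have hnum : HasDerivAt (fun u ↦ u * (3 + u ^ 2)) (3 + 3 * s ^ 2) s :=
      ((hasDerivAt_id' s).fun_mul ((hasDerivAt_const s 3).fun_add
        (hasDerivAt_pow 2 s))).congr_deriv (by ring)
    have hden : HasDerivAt (fun u ↦ 3 + 2 * u ^ 2 + 3 * u ^ 4) (4 * s + 12 * s ^ 3) s :=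
      (((hasDerivAt_const s 3).fun_add ((hasDerivAt_pow 2 s).const_mul 2)).fun_add
        ((hasDerivAt_pow 4 s).const_mul 3)).congr_deriv (by ring)
    refine ((hasDerivAt_arctan s).fun_sub (hnum.fun_div hden (hq s).ne')).congr_deriv ?_
    have := (hq s).ne'
    field_simp
    ring
  have hmono : StrictMonoOn (fun u ↦ arctan u - u * (3 + u ^ 2) / (3 + 2 * u ^ 2 + 3 * u ^ 4))
      (Ici 0) := by
    refine strictMonoOn_of_hasDerivAt_pos (convex_Ici 0) (fun s _ ↦ hderiv s) ?_
    rw [interior_Ici]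
    intro s hs
    have : 0 < s := hs
    positivity
  simpa using hmono self_mem_Ici ht.le ht

noncomputable def FHDerivNumTan (x : ℝ) : ℝ :=
  2 * x ^ 2 + x * (tan x ^ 3 - tan x) - tan x ^ 2

theorem FHDerivNum_eq_neg_cos_pow_three_mul {x : ℝ} (hx : cos x ≠ 0) :
    FHDerivNum x = -cos x ^ 3 * FHDerivNumTan x := by
  rw [FHDerivNum, FHDerivNumTan, tan_eq_sin_div_cos]
  field_simp
  ring

theorem hasDerivAt_FHDerivNumTan {x : ℝ} (hx : cos x ≠ 0) :
    HasDerivAt FHDerivNumTan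
      (x * (3 + 2 * tan x ^ 2 + 3 * tan x ^ 4) - tan x * (3 + tan x ^ 2)) x := by
  have htan : HasDerivAt tan (1 + tan x ^ 2) x := by
    refine (hasDerivAt_tan hx).congr_deriv ?_
    rw [tan_eq_sin_div_cos]
    field_simp
    linear_combination -sin_sq_add_cos_sq x
  refine ((((hasDerivAt_pow 2 x).const_mul 2).fun_add ((hasDerivAt_id' x).fun_mul
    ((htan.fun_pow 3).fun_sub htan))).fun_sub (htan.fun_pow 2)).congr_deriv ?_
  ring

theorem cos_ne_zero_of_mem_Icc {x : ℝ} (hx : x ∈ Icc 0 π) (hx' : x ≠ π / 2) : cos x ≠ 0 :=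
  fun h ↦ hx' <| injOn_cos hx ⟨by positivity, by linarith [pi_pos]⟩ (by rw [h, cos_pi_div_two])

theorem FHDerivNumTan_deriv_pos {x : ℝ} (hx : x ∈ Ioo 0 π) (hx' : x ≠ π / 2) :
    0 < x * (3 + 2 * tan x ^ 2 + 3 * tan x ^ 4) - tan x * (3 + tan x ^ 2) := by
  have hq : 0 < 3 + 2 * tan x ^ 2 + 3 * tan x ^ 4 := by positivity
  rcases hx'.lt_or_gt with hlt | hgt
  · have htan := tan_pos_of_pos_of_lt_pi_div_two hx.1 hlt
    have := cubic_div_quartic_lt_arctan htan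
    rw [arctan_tan (by linarith [pi_pos, hx.1]) hlt, div_lt_iff₀ hq] at this
    linarith
  · have htan : tan x < 0 := by
      rw [tan_eq_sin_div_cos]
      exact div_neg_of_pos_of_neg (sin_pos_of_pos_of_lt_pi hx.1 hx.2)
        (cos_neg_of_pi_div_two_lt_of_lt hgt (by linarith [pi_pos, hx.2]))
    nlinarith [mul_pos hx.1 hq]

theorem strictMonoOn_FHDerivNumTan {D : Set ℝ} (hD : Convex ℝ D) (hDsub : D ⊆ Icc 0 π)
    (hD' : π / 2 ∉ D) : StrictMonoOn FHDerivNumTan D := by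
  have hne {x : ℝ} (hx : x ∈ D) : x ≠ π / 2 := fun h ↦ hD' (h ▸ hx)
  refine strictMonoOn_of_hasDerivAt_pos hD
    (fun x hx ↦ hasDerivAt_FHDerivNumTan (cos_ne_zero_of_mem_Icc (hDsub hx) (hne hx))) ?_
  intro x hx
  have hx₀ : x ∈ Ioo 0 π := by simpa using interior_mono hDsub hx
  exact FHDerivNumTan_deriv_pos hx₀ (hne (interior_subset hx))

theorem FHDerivNum_neg_of_le_pi_div_two {x : ℝ} (hx : 0 < x) (hxπ : x ≤ π / 2) :
    FHDerivNum x < 0 := by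
  rcases hxπ.lt_or_eq with hlt | rfl
  · have hmono : StrictMonoOn FHDerivNumTan (Ico 0 (π / 2)) :=
      strictMonoOn_FHDerivNumTan (convex_Ico 0 _)
        (Ico_subset_Icc_self.trans (Icc_subset_Icc_right (by linarith [pi_pos]))) (by simp)
    have hpos : 0 < FHDerivNumTan x := by
      simpa [FHDerivNumTan] using hmono (left_mem_Ico.2 (by positivity)) ⟨hx.le, hlt⟩ hx
    have hcos : 0 < cos x := cos_pos_of_mem_Ioo ⟨by linarith, hlt⟩
    rw [FHDerivNum_eq_neg_cos_pow_three_mul hcos.ne']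
    nlinarith [pow_pos hcos 3]
  · simp [FHDerivNum, pi_pos]

theorem FHDerivNumTan_two_pi_div_three_neg : FHDerivNumTan (2 * π / 3) < 0 := by
  have htan : tan (2 * π / 3) = -√3 := by
    rw [show 2 * π / 3 = π - π / 3 by ring, tan_pi_sub, tan_pi_div_three]
  have h3 : √3 ^ 2 = 3 := sq_sqrt (by norm_num)
  have : (1.7 : ℝ) < √3 := by
    rw [lt_sqrt (by norm_num)]
    norm_num
  have hx : 2 * π / 3 < 2.1 := by linarith [pi_lt_d2]
  have hx' : 2 < 2 * π / 3 := by linarith [pi_gt_three]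
  have hφ : FHDerivNumTan (2 * π / 3) = 2 * (2 * π / 3) ^ 2 - 2 * √3 * (2 * π / 3) - 3 := by
    rw [FHDerivNumTan, htan]
    linear_combination (-(2 * π / 3) * √3 - 1) * h3
  rw [hφ]
  nlinarith

theorem exists_FHDerivNum_sign_change :
    ∃ m ∈ Ioo 0 π, (∀ x ∈ Ioo 0 m, FHDerivNum x < 0) ∧ (∀ x ∈ Ioo m π, 0 < FHDerivNum x) := by
  have hπ := pi_pos
  have hsub : Icc (2 * π / 3) π ⊆ Icc 0 π := Icc_subset_Icc_left (by positivity)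
  have hmono : StrictMonoOn FHDerivNumTan (Ioc (π / 2) π) :=
    strictMonoOn_FHDerivNumTan (convex_Ioc _ _) (Ioc_subset_Icc_self.trans
      (Icc_subset_Icc_left (by positivity))) (fun h ↦ lt_irrefl _ h.1)
  have hcont : ContinuousOn FHDerivNumTan (Icc (2 * π / 3) π) := by
    have : ContinuousOn tan (Icc (2 * π / 3) π) := continuousOn_tan.mono
      fun x hx ↦ cos_ne_zero_of_mem_Icc (hsub hx) (by linarith [hx.1])
    unfold FHDerivNumTan
    fun_prop
  have hπpos : 0 < FHDerivNumTan π := by simp [FHDerivNumTan, tan_pi, pi_pos]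
  obtain ⟨m, hm, hm0⟩ := intermediate_value_Ioo (by linarith) hcont
    ⟨FHDerivNumTan_two_pi_div_three_neg, hπpos⟩
  have hsign {x : ℝ} (hx : x ∈ Ioo (π / 2) π) :
      FHDerivNum x = -cos x ^ 3 * FHDerivNumTan x ∧ 0 < -cos x ^ 3 := by
    have hcos := cos_neg_of_pi_div_two_lt_of_lt hx.1 (by linarith [hx.2])
    exact ⟨FHDerivNum_eq_neg_cos_pow_three_mul hcos.ne, by nlinarith [pow_pos (neg_pos.2 hcos) 3]⟩
  refine ⟨m, ⟨by linarith [hm.1], hm.2⟩, fun x hx ↦ ?_, fun x hx ↦ ?_⟩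
  · rcases le_or_gt x (π / 2) with hle | hgt
    · exact FHDerivNum_neg_of_le_pi_div_two hx.1 hle
    · obtain ⟨heq, hc⟩ := hsign ⟨hgt, hx.2.trans hm.2⟩
      have : FHDerivNumTan x < 0 := by
        rw [← hm0]
        exact hmono ⟨hgt, (hx.2.trans hm.2).le⟩ ⟨by linarith [hm.1], hm.2.le⟩ hx.2
      rw [heq]
      nlinarith
  · obtain ⟨heq, hc⟩ := hsign ⟨by linarith [hm.1, hx.1], hx.2⟩
    have : 0 < FHDerivNumTan x := by
      rw [← hm0]
      exact hmono ⟨by linarith [hm.1], hm.2.le⟩ ⟨by linarith [hm.1, hx.1], hx.2.le⟩ hx.1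
    rw [heq]
    positivity

/-- There is a unique `φ_m ∈ (0,π)` such that `F` is strictly decreasing on
`(0,φ_m]` and strictly increasing on `[φ_m,π)`; moreover `F(π/2) = 0` and
`F(φ) → 0` as `φ → π⁻`. -/
theorem FH_unique_min :
    (∃! φm : ℝ, φm ∈ Set.Ioo 0 π ∧
      StrictAntiOn FH (Set.Ioc 0 φm) ∧ StrictMonoOn FH (Set.Ico φm π)) ∧
    FH (π / 2) = 0 ∧
    Tendsto FH (nhdsWithin π (Set.Ioo 0 π)) (nhds 0) := by
  obtain ⟨m, hm, hneg, hpos⟩ := exists_FHDerivNum_sign_change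
  have hderiv (x : ℝ) (hx : x ∈ Ioo 0 π) := hasDerivAt_FH hx.1 hx.2.le
  have hD (x : ℝ) (hx : x ∈ Ioo 0 π) : 0 < (sin x - x * cos x) ^ 2 := pow_pos (sin_sub_mul_cos_pos hx.1 hx.2.le) 2
  have hsin (x : ℝ) (hx : x ∈ Ioo 0 π) : 0 < sin x := sin_pos_of_pos_of_lt_pi hx.1 hx.2
  have hmin := strictAntiOn_Ioc_and_strictMonoOn_Ico_of_hasDerivAt hm hderiv
    (fun x hx ↦ have hx' : x ∈ Ioo 0 π := ⟨hx.1, hx.2.trans hm.2⟩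
      div_neg_of_neg_of_pos (mul_neg_of_pos_of_neg (hsin x hx') (hneg x hx)) (hD x hx'))
    (fun x hx ↦ have hx' : x ∈ Ioo 0 π := ⟨hm.1.trans hx.1, hx.2⟩
      div_pos (mul_pos (hsin x hx') (hpos x hx)) (hD x hx'))
  refine ⟨⟨m, ⟨hm, hmin⟩, fun m' ⟨hm', hmin'⟩ ↦ ?_⟩, by simp [FH], ?_⟩
  · exact (eq_of_strictAntiOn_Ioc_of_strictMonoOn_Ico hm hm' hmin.1 hmin.2 hmin'.1 hmin'.2).symm
  · have hFπ : FH π = 0 := by simp [FH]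
    simpa only [ContinuousWithinAt, hFπ] using
      (hasDerivAt_FH pi_pos le_rfl).continuousAt.continuousWithinAt (s := Ioo 0 π)
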